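/- Optimal strategy of the AFS model, Version 2 (constant resilience, Theorem 5.1 of Alfonsi–Fruth–Schied as restated in the paper): let ρ > 0 be constant, suppose the function h₂(x) := x·[f(x) − e^{−2ρτ}f(e^{−ρτ}x)]/[f(x) − e^{−ρτ}f(e^{−ρτ}x)] is one-to-one, and suppose x²·inf{f(y) : y ∈ [e^{−ρτ}x, x]} → ∞ as |x| → ∞. Then the cost functional C⁽²⁾ (with ρ̄ ≡ ρ) has a unique minimizer ξ = (ξ₀,…,ξ_N) on Ξ. The initial order ξ₀ is the unique solution of F⁻¹(X₀ − N[ξ₀ − F(e^{−ρτ}F⁻¹(ξ₀))]) = h₂(F⁻¹(ξ₀)); the intermediate orders satisfy ξ₁ = … = ξ_{N−1} = ξ₀ − F(e^{−ρτ}F⁻¹(ξ₀)); the final order is ξ_N = X₀ − ∑_{n=0}^{N−1} ξₙ; and ξₙ > 0 for all n. -/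

import Mathlib

/-!
Write `Yₙ = F(Dₙ⁺) = xₙ + F(Dₙ)` for the level right after the `n`-th trade and
`L(y) = F(a F⁻¹(y))` for its decay, so that `F(Dₙ₊₁) = L(Yₙ)`. The strategy is recovered from the
levels, the cost is `G(Y_N) + ∑_{n<N} [G(Yₙ) − G(L Yₙ)]`, and the constraint `∑ xₙ = X₀` becomes
`Y_N = X₀ − ∑_{n<N} (Yₙ − L Yₙ)`. Minimising `C⁽²⁾` over `Ξ` is therefore the unconstrained
minimisation of a function of `(Y₀, …, Y_{N−1}) ∈ ℝᴺ`, which is coercive by the growth condition on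
`x² inf f` and so has a minimiser. Its first-order condition in `Yᵢ` reads
`h₂(F⁻¹ Yᵢ) = F⁻¹(Y_N)`, hence injectivity of `h₂` makes all `Yᵢ` equal to one `z`, a root of
`F⁻¹(X₀ − N (z − L z)) = h₂(F⁻¹ z)`; this root, and with it the minimiser, is unique.
-/

open Real Filter Finset

/-- `Fi f x = F(x) = ∫₀ˣ f(y) dy`. -/
noncomputable def Fi (f : ℝ → ℝ) (x : ℝ) : ℝ := ∫ y in (0:ℝ)..x, f y

/-- `Ft f x = F̃(x) = ∫₀ˣ y f(y) dy`. -/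
noncomputable def Ft (f : ℝ → ℝ) (x : ℝ) : ℝ := ∫ y in (0:ℝ)..x, y * f y

/-- `Gf f Finv = G = F̃ ∘ F⁻¹`. -/
noncomputable def Gf (f Finv : ℝ → ℝ) (x : ℝ) : ℝ := Ft f (Finv x)

/-- Version 2 dynamics with constant resilience factor `a = e^{−ρτ}`:
`D₀ = 0`, `Dₙ⁺ = F⁻¹(F(Dₙ) + xₙ)`, `D_{n+1} = a·Dₙ⁺`. -/
noncomputable def DvC (f Finv : ℝ → ℝ) (a : ℝ) (x : ℕ → ℝ) : ℕ → ℝ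
  | 0 => 0
  | n + 1 => a * Finv (Fi f (DvC f Finv a x n) + x n)

/-- Version 2 cost functional with constant resilience. -/
noncomputable def C2C (f Finv : ℝ → ℝ) (a : ℝ) (N : ℕ) (x : ℕ → ℝ) : ℝ :=
  ∑ n ∈ Finset.range (N + 1),
    (Gf f Finv (x n + Fi f (DvC f Finv a x n)) - Ft f (DvC f Finv a x n))

lemma continuous_of_hasDerivAt {g g' : ℝ → ℝ} (h : ∀ y, HasDerivAt g (g' y) y) : Continuous g :=
  continuous_iff_continuousAt.2 fun y => (h y).continuousAt

lemma tendsto_cocompact_pi_of_le {ι X α : Type*} [TopologicalSpace X] [Preorder α]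
    {Φ : (ι → X) → α} {H : X → α} (hH : Tendsto H (cocompact X) atTop)
    (hle : ∀ w i, H (w i) ≤ Φ w) : Tendsto Φ (cocompact (ι → X)) atTop := by
  rw [← Filter.coprodᵢ_cocompact, Filter.coprodᵢ, tendsto_iSup]
  exact fun i => tendsto_atTop_mono (hle · i) (hH.comp tendsto_comap)

lemma hasDerivAt_sum_comp_update {ι : Type*} [Fintype ι] [DecidableEq ι] {H H' : ℝ → ℝ}
    (hH : ∀ y, HasDerivAt H (H' y) y) (w : ι → ℝ) (i : ι) :
    HasDerivAt (fun t => ∑ j, H (Function.update w i t j)) (H' (w i)) (w i) := by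
  have hj (j : ι) := (hH _).comp (w i) (hasDerivAt_pi.1 (hasDerivAt_update w i (w i)) j)
  refine (HasDerivAt.fun_sum fun j _ => hj j).congr_deriv ?_
  simp [Function.update_eq_self, Pi.single_apply]

section ReducedCost

variable {ι : Type*} [Fintype ι] {H K G : ℝ → ℝ}

def reducedCost (H K G : ℝ → ℝ) (c : ℝ) (w : ι → ℝ) : ℝ :=
  ∑ i, H (w i) + G (c - ∑ i, K (w i))

lemma exists_forall_reducedCost_le (hH : Continuous H) (hK : Continuous K) (hG : Continuous G)
    (hH0 : ∀ y, 0 ≤ H y) (hG0 : ∀ y, 0 ≤ G y) (hHc : Tendsto H (cocompact ℝ) atTop) (c : ℝ) :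
    ∃ w : ι → ℝ, ∀ w' : ι → ℝ, reducedCost H K G c w ≤ reducedCost H K G c w' := by
  refine Continuous.exists_forall_le (by unfold reducedCost; fun_prop)
    (tendsto_cocompact_pi_of_le hHc fun w i => ?_)
  have hi := Finset.single_le_sum (fun j _ => hH0 (w j)) (Finset.mem_univ i)
  have := hG0 (c - ∑ j, K (w j))
  unfold reducedCost
  linarith

lemma deriv_eq_of_forall_reducedCost_le {H' K' G' : ℝ → ℝ} (hH : ∀ y, HasDerivAt H (H' y) y)
    (hK : ∀ y, HasDerivAt K (K' y) y) (hG : ∀ y, HasDerivAt G (G' y) y) {c : ℝ} {w : ι → ℝ}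
    (hw : ∀ w' : ι → ℝ, reducedCost H K G c w ≤ reducedCost H K G c w') (i : ι) :
    H' (w i) = G' (c - ∑ j, K (w j)) * K' (w i) := by
  classical
  have hmin : IsLocalMin (fun t => reducedCost H K G c (Function.update w i t)) (w i) :=
    Eventually.of_forall fun t => by
      simpa only [Function.update_eq_self] using hw (Function.update w i t)
  have hd := (hasDerivAt_sum_comp_update hH w i).add
    ((hG _).comp (w i) ((hasDerivAt_sum_comp_update hK w i).const_sub c))
  simp only [Function.update_eq_self] at hd
  have := hmin.hasDerivAt_eq_zero hd
  linarith

end ReducedCost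

section Potential

variable {f : ℝ → ℝ}

lemma Fi_zero : Fi f 0 = 0 := intervalIntegral.integral_same

lemma Ft_zero : Ft f 0 = 0 := intervalIntegral.integral_same

lemma hasDerivAt_Fi (hf : Continuous f) (x : ℝ) : HasDerivAt (Fi f) (f x) x :=
  intervalIntegral.integral_hasDerivAt_right (hf.intervalIntegrable _ _)
    (hf.stronglyMeasurableAtFilter _ _) hf.continuousAt

lemma hasDerivAt_Ft (hf : Continuous f) (x : ℝ) : HasDerivAt (Ft f) (x * f x) x :=
  hasDerivAt_Fi (continuous_id.mul hf) x

lemma continuous_Ft (hf : Continuous f) : Continuous (Ft f) :=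
  continuous_of_hasDerivAt (hasDerivAt_Ft hf)

lemma strictMono_Fi (hf : Continuous f) (hfpos : ∀ x, 0 < f x) : StrictMono (Fi f) :=
  strictMono_of_hasDerivAt_pos (hasDerivAt_Fi hf) hfpos

lemma mul_sq_le_Ft_sub (hf : Continuous f) {b u m : ℝ} (hb0 : 0 ≤ b) (hb1 : b ≤ 1)
    (hm : ∀ s ∈ Set.uIcc (b * u) u, m ≤ f s) :
    (1 - b ^ 2) / 2 * u ^ 2 * m ≤ Ft f u - Ft f (b * u) := by
  have hsf (p q : ℝ) : IntervalIntegrable (fun s => s * f s) MeasureTheory.volume p q :=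
    (continuous_id.mul hf).intervalIntegrable p q
  have hsm (p q : ℝ) : IntervalIntegrable (fun s => s * m) MeasureTheory.volume p q :=
    (continuous_id.mul continuous_const).intervalIntegrable p q
  have hlin : ∫ s in (b * u)..u, s * m = (1 - b ^ 2) / 2 * u ^ 2 * m := by
    rw [intervalIntegral.integral_mul_const, integral_id]; ring
  rw [← hlin, Ft, Ft, intervalIntegral.integral_interval_sub_left (hsf 0 u) (hsf 0 (b * u))]
  rcases le_total 0 u with hu | hu
  · have hbu : b * u ≤ u := by nlinarith
    refine intervalIntegral.integral_mono_on hbu (hsm _ _) (hsf _ _) fun s hs => ?_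
    exact mul_le_mul_of_nonneg_left (hm s (Set.Icc_subset_uIcc hs)) (by nlinarith [hs.1])
  · have hbu : u ≤ b * u := by nlinarith
    rw [intervalIntegral.integral_symm, intervalIntegral.integral_symm u, neg_le_neg_iff]
    refine intervalIntegral.integral_mono_on hbu (hsf _ _) (hsm _ _) fun s hs => ?_
    exact mul_le_mul_of_nonpos_left (hm s (Set.Icc_subset_uIcc' hs)) (by nlinarith [hs.2])

lemma Ft_nonneg (hf : Continuous f) (hfpos : ∀ x, 0 < f x) (u : ℝ) : 0 ≤ Ft f u := by
  have h := mul_sq_le_Ft_sub hf le_rfl zero_le_one (u := u) fun s _ => (hfpos s).le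
  rwa [zero_mul, Ft_zero, mul_zero, sub_zero] at h

end Potential

section Inverse

variable {f Finv : ℝ → ℝ}

lemma Finv_Fi (hf : Continuous f) (hfpos : ∀ x, 0 < f x) (hFinv : ∀ x, Fi f (Finv x) = x)
    (x : ℝ) : Finv (Fi f x) = x :=
  (strictMono_Fi hf hfpos).injective (hFinv _)

lemma Finv_zero (hf : Continuous f) (hfpos : ∀ x, 0 < f x) (hFinv : ∀ x, Fi f (Finv x) = x) :
    Finv 0 = 0 := by
  simpa [Fi_zero] using Finv_Fi hf hfpos hFinv 0

lemma strictMono_Finv (hf : Continuous f) (hfpos : ∀ x, 0 < f x)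
    (hFinv : ∀ x, Fi f (Finv x) = x) : StrictMono Finv := fun x y hxy =>
  (strictMono_Fi hf hfpos).lt_iff_lt.1 (by rwa [hFinv, hFinv])

lemma continuous_Finv (hf : Continuous f) (hfpos : ∀ x, 0 < f x)
    (hFinv : ∀ x, Fi f (Finv x) = x) : Continuous Finv :=
  (strictMono_Finv hf hfpos hFinv).monotone.continuous_of_surjective
    fun x => ⟨Fi f x, Finv_Fi hf hfpos hFinv x⟩

lemma hasDerivAt_Finv (hf : Continuous f) (hfpos : ∀ x, 0 < f x)
    (hFinv : ∀ x, Fi f (Finv x) = x) (y : ℝ) : HasDerivAt Finv (f (Finv y))⁻¹ y :=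
  .of_local_left_inverse (continuous_Finv hf hfpos hFinv).continuousAt
    (hasDerivAt_Fi hf (Finv y)) (hfpos _).ne' (Eventually.of_forall hFinv)

lemma tendsto_Finv_atTop (hf : Continuous f) (hfpos : ∀ x, 0 < f x)
    (hFinv : ∀ x, Fi f (Finv x) = x) : Tendsto Finv atTop atTop :=
  tendsto_atTop_atTop_of_monotone (strictMono_Finv hf hfpos hFinv).monotone
    fun x => ⟨Fi f x, (Finv_Fi hf hfpos hFinv x).ge⟩

lemma tendsto_Finv_atBot (hf : Continuous f) (hfpos : ∀ x, 0 < f x)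
    (hFinv : ∀ x, Fi f (Finv x) = x) : Tendsto Finv atBot atBot :=
  tendsto_atBot_atBot_of_monotone (strictMono_Finv hf hfpos hFinv).monotone
    fun x => ⟨Fi f x, (Finv_Fi hf hfpos hFinv x).le⟩

lemma hasDerivAt_Gf (hf : Continuous f) (hfpos : ∀ x, 0 < f x)
    (hFinv : ∀ x, Fi f (Finv x) = x) (y : ℝ) : HasDerivAt (Gf f Finv) (Finv y) y := by
  have h := (hasDerivAt_Ft hf (Finv y)).comp y (hasDerivAt_Finv hf hfpos hFinv y)
  rwa [mul_inv_cancel_right₀ (hfpos _).ne'] at h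

end Inverse

noncomputable def decayedLevel (f Finv : ℝ → ℝ) (a y : ℝ) : ℝ := Fi f (a * Finv y)

noncomputable def levelDrop (f Finv : ℝ → ℝ) (a y : ℝ) : ℝ := y - decayedLevel f Finv a y

noncomputable def stageCost (f Finv : ℝ → ℝ) (a y : ℝ) : ℝ :=
  Gf f Finv y - Gf f Finv (decayedLevel f Finv a y)

noncomputable def h2 (f : ℝ → ℝ) (a x : ℝ) : ℝ :=
  x * ((f x - a ^ 2 * f (a * x)) / (f x - a * f (a * x)))

section Decay

variable {f Finv : ℝ → ℝ} {a : ℝ}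

lemma Finv_decayedLevel (hf : Continuous f) (hfpos : ∀ x, 0 < f x)
    (hFinv : ∀ x, Fi f (Finv x) = x) (y : ℝ) : Finv (decayedLevel f Finv a y) = a * Finv y :=
  Finv_Fi hf hfpos hFinv _

lemma stageCost_eq (hf : Continuous f) (hfpos : ∀ x, 0 < f x)
    (hFinv : ∀ x, Fi f (Finv x) = x) (y : ℝ) :
    stageCost f Finv a y = Ft f (Finv y) - Ft f (a * Finv y) := by
  rw [stageCost, Gf, Gf, Finv_decayedLevel hf hfpos hFinv]

lemma hasDerivAt_decayedLevel (hf : Continuous f) (hfpos : ∀ x, 0 < f x)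
    (hFinv : ∀ x, Fi f (Finv x) = x) (y : ℝ) :
    HasDerivAt (decayedLevel f Finv a) (a * f (a * Finv y) / f (Finv y)) y := by
  have h := (hasDerivAt_Fi hf (a * Finv y)).comp y
    ((hasDerivAt_Finv hf hfpos hFinv y).const_mul a)
  exact h.congr_deriv (by ring)

lemma hasDerivAt_levelDrop (hf : Continuous f) (hfpos : ∀ x, 0 < f x)
    (hFinv : ∀ x, Fi f (Finv x) = x) (y : ℝ) :
    HasDerivAt (levelDrop f Finv a) (1 - a * f (a * Finv y) / f (Finv y)) y :=
  (hasDerivAt_id y).sub (hasDerivAt_decayedLevel hf hfpos hFinv y)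

lemma hasDerivAt_stageCost (hf : Continuous f) (hfpos : ∀ x, 0 < f x)
    (hFinv : ∀ x, Fi f (Finv x) = x) (y : ℝ) :
    HasDerivAt (stageCost f Finv a)
      (Finv y - a * Finv y * (a * f (a * Finv y) / f (Finv y))) y := by
  have h := (hasDerivAt_Gf hf hfpos hFinv (decayedLevel f Finv a y)).comp y
    (hasDerivAt_decayedLevel hf hfpos hFinv y)
  rw [Finv_decayedLevel hf hfpos hFinv] at h
  exact (hasDerivAt_Gf hf hfpos hFinv y).sub h

lemma Gf_nonneg (hf : Continuous f) (hfpos : ∀ x, 0 < f x) (y : ℝ) : 0 ≤ Gf f Finv y :=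
  Ft_nonneg hf hfpos _

lemma stageCost_nonneg (hf : Continuous f) (hfpos : ∀ x, 0 < f x)
    (hFinv : ∀ x, Fi f (Finv x) = x) (ha0 : 0 ≤ a) (ha1 : a ≤ 1) (y : ℝ) :
    0 ≤ stageCost f Finv a y := by
  have h := mul_sq_le_Ft_sub hf ha0 ha1 (u := Finv y) fun s _ => (hfpos s).le
  rwa [mul_zero, ← stageCost_eq hf hfpos hFinv] at h

lemma tendsto_stageCost_cocompact (hf : Continuous f) (hfpos : ∀ x, 0 < f x)
    (hFinv : ∀ x, Fi f (Finv x) = x) (ha0 : 0 ≤ a) (ha1 : a < 1)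
    (hfinf₁ : Tendsto (fun x : ℝ => x ^ 2 * sInf (f '' Set.uIcc (a * x) x)) atTop atTop)
    (hfinf₂ : Tendsto (fun x : ℝ => x ^ 2 * sInf (f '' Set.uIcc (a * x) x)) atBot atTop) :
    Tendsto (stageCost f Finv a) (cocompact ℝ) atTop := by
  have hbound (u : ℝ) : (1 - a ^ 2) / 2 * (u ^ 2 * sInf (f '' Set.uIcc (a * u) u))
      ≤ Ft f u - Ft f (a * u) := by
    rw [← mul_assoc]
    refine mul_sq_le_Ft_sub hf ha0 ha1.le fun s hs => csInf_le ?_ ⟨s, hs, rfl⟩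
    exact ⟨0, by rintro _ ⟨t, -, rfl⟩; exact (hfpos t).le⟩
  have hc : 0 < (1 - a ^ 2) / 2 := by nlinarith
  have hcongr : (fun u => Ft f u - Ft f (a * u)) ∘ Finv = stageCost f Finv a :=
    funext fun y => (stageCost_eq hf hfpos hFinv y).symm
  rw [cocompact_eq_atBot_atTop, tendsto_sup, ← hcongr]
  exact ⟨(tendsto_atTop_mono hbound (hfinf₂.const_mul_atTop hc)).comp
      (tendsto_Finv_atBot hf hfpos hFinv),
    (tendsto_atTop_mono hbound (hfinf₁.const_mul_atTop hc)).comp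
      (tendsto_Finv_atTop hf hfpos hFinv)⟩

lemma levelDrop_pos_iff (hf : Continuous f) (hfpos : ∀ x, 0 < f x)
    (hFinv : ∀ x, Fi f (Finv x) = x) (ha0 : 0 < a) (ha1 : a < 1) {y : ℝ} :
    0 < levelDrop f Finv a y ↔ 0 < y := by
  have hFi := strictMono_Fi hf hfpos
  have hFinvM := strictMono_Finv hf hfpos hFinv
  calc 0 < levelDrop f Finv a y ↔ Fi f (a * Finv y) < Fi f (Finv y) := by
        rw [levelDrop, decayedLevel, hFinv, sub_pos]
    _ ↔ a * Finv y < Finv y := hFi.lt_iff_lt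
    _ ↔ 0 < Finv y := ⟨fun h => by nlinarith, fun h => by nlinarith⟩
    _ ↔ Finv 0 < Finv y := by rw [Finv_zero hf hfpos hFinv]
    _ ↔ 0 < y := hFinvM.lt_iff_lt

end Decay

section H2

variable {f : ℝ → ℝ} {a : ℝ}

lemma h2_zero : h2 f a 0 = 0 := zero_mul _

/-- Where the denominator of `h₂` vanishes, `h₂` is `0` (division by zero), so injectivity of
`h₂` excludes such points; the sign is then read off at `x = 0`. -/
lemma h2_denom_pos (hf : Continuous f) (hfpos : ∀ x, 0 < f x) (ha1 : a < 1)
    (hh2 : Function.Injective (h2 f a)) (x : ℝ) : 0 < f x - a * f (a * x) := by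
  have h0 : 0 < f 0 - a * f (a * 0) := by rw [mul_zero]; nlinarith [hfpos 0]
  by_contra! hx
  obtain ⟨z, hz⟩ := intermediate_value_univ x 0
    (by fun_prop : Continuous fun z => f z - a * f (a * z)) ⟨hx, h0.le⟩
  have hz0 : z = 0 := hh2 (by simp only at hz; rw [h2_zero, h2, hz, div_zero, mul_zero])
  exact h0.ne' (hz0 ▸ hz)

lemma one_lt_h2_ratio (hf : Continuous f) (hfpos : ∀ x, 0 < f x) (ha0 : 0 < a) (ha1 : a < 1)
    (hh2 : Function.Injective (h2 f a)) (x : ℝ) :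
    1 < (f x - a ^ 2 * f (a * x)) / (f x - a * f (a * x)) := by
  rw [one_lt_div (h2_denom_pos hf hfpos ha1 hh2 x)]
  have := mul_pos (mul_pos ha0 (sub_pos.2 ha1)) (hfpos (a * x))
  nlinarith

lemma lt_h2 (hf : Continuous f) (hfpos : ∀ x, 0 < f x) (ha0 : 0 < a) (ha1 : a < 1)
    (hh2 : Function.Injective (h2 f a)) {x : ℝ} (hx : 0 < x) : x < h2 f a x :=
  lt_mul_of_one_lt_right hx (one_lt_h2_ratio hf hfpos ha0 ha1 hh2 x)

lemma strictMono_h2 (hf : Continuous f) (hfpos : ∀ x, 0 < f x) (ha0 : 0 < a) (ha1 : a < 1)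
    (hh2 : Function.Injective (h2 f a)) : StrictMono (h2 f a) := by
  have hcont : Continuous (h2 f a) :=
    continuous_id.mul ((by fun_prop : Continuous fun x => f x - a ^ 2 * f (a * x)).div
      (by fun_prop) fun x => (h2_denom_pos hf hfpos ha1 hh2 x).ne')
  refine (hcont.strictMono_of_inj hh2).resolve_right fun hanti => ?_
  have h01 := hanti zero_lt_one
  have h1 := lt_h2 hf hfpos ha0 ha1 hh2 zero_lt_one
  rw [h2_zero] at h01
  linarith

end H2

section Optimum

variable {f Finv : ℝ → ℝ} {a : ℝ}

lemma continuous_Gf (hf : Continuous f) (hfpos : ∀ x, 0 < f x)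
    (hFinv : ∀ x, Fi f (Finv x) = x) : Continuous (Gf f Finv) :=
  (continuous_Ft hf).comp (continuous_Finv hf hfpos hFinv)

lemma Gf_Fi (hf : Continuous f) (hfpos : ∀ x, 0 < f x) (hFinv : ∀ x, Fi f (Finv x) = x)
    (x : ℝ) : Gf f Finv (Fi f x) = Ft f x := by
  rw [Gf, Finv_Fi hf hfpos hFinv]

lemma exists_forall_reducedCost_stageCost_le (hf : Continuous f) (hfpos : ∀ x, 0 < f x)
    (hFinv : ∀ x, Fi f (Finv x) = x) (ha0 : 0 < a) (ha1 : a < 1)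
    (hfinf₁ : Tendsto (fun x : ℝ => x ^ 2 * sInf (f '' Set.uIcc (a * x) x)) atTop atTop)
    (hfinf₂ : Tendsto (fun x : ℝ => x ^ 2 * sInf (f '' Set.uIcc (a * x) x)) atBot atTop)
    (ι : Type*) [Fintype ι] (X₀ : ℝ) :
    ∃ w : ι → ℝ, ∀ w' : ι → ℝ, reducedCost (stageCost f Finv a) (levelDrop f Finv a) (Gf f Finv) X₀ w ≤
      reducedCost (stageCost f Finv a) (levelDrop f Finv a) (Gf f Finv) X₀ w' :=
  exists_forall_reducedCost_le
    (continuous_of_hasDerivAt (hasDerivAt_stageCost hf hfpos hFinv))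
    (continuous_of_hasDerivAt (hasDerivAt_levelDrop hf hfpos hFinv))
    (continuous_Gf hf hfpos hFinv) (stageCost_nonneg hf hfpos hFinv ha0.le ha1.le)
    (Gf_nonneg hf hfpos) (tendsto_stageCost_cocompact hf hfpos hFinv ha0.le ha1 hfinf₁ hfinf₂) X₀

lemma h2_eq_of_deriv_eq (hf : Continuous f) (hfpos : ∀ x, 0 < f x) (ha1 : a < 1)
    (hh2 : Function.Injective (h2 f a)) {u v : ℝ}
    (h : u - a * u * (a * f (a * u) / f u) = v * (1 - a * f (a * u) / f u)) :
    h2 f a u = v := by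
  have hfu := (hfpos u).ne'
  rw [h2, ← mul_div_assoc, div_eq_iff (h2_denom_pos hf hfpos ha1 hh2 u).ne']
  field_simp at h
  rw [mul_comm u a] at h
  linear_combination h

lemma exists_const_of_forall_reducedCost_le (hf : Continuous f) (hfpos : ∀ x, 0 < f x)
    (hFinv : ∀ x, Fi f (Finv x) = x) (ha1 : a < 1) (hh2 : Function.Injective (h2 f a))
    {N : ℕ} (hN : 0 < N) {X₀ : ℝ} {w : Fin N → ℝ}
    (hw : ∀ w' : Fin N → ℝ, reducedCost (stageCost f Finv a) (levelDrop f Finv a) (Gf f Finv) X₀ w ≤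
      reducedCost (stageCost f Finv a) (levelDrop f Finv a) (Gf f Finv) X₀ w') :
    ∃ z, w = Function.const _ z ∧
      Finv (X₀ - N * levelDrop f Finv a z) = h2 f a (Finv z) := by
  have hfoc (i : Fin N) : h2 f a (Finv (w i)) = Finv (X₀ - ∑ j, levelDrop f Finv a (w j)) :=
    h2_eq_of_deriv_eq hf hfpos ha1 hh2 (deriv_eq_of_forall_reducedCost_le
      (hasDerivAt_stageCost hf hfpos hFinv) (hasDerivAt_levelDrop hf hfpos hFinv)
      (hasDerivAt_Gf hf hfpos hFinv) hw i)
  have hconst (i : Fin N) : w i = w ⟨0, hN⟩ :=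
    (strictMono_Finv hf hfpos hFinv).injective (hh2 ((hfoc i).trans (hfoc _).symm))
  have hw_eq : w = Function.const _ (w ⟨0, hN⟩) := funext hconst
  refine ⟨w ⟨0, hN⟩, hw_eq, ?_⟩
  rw [hfoc, hw_eq]
  simp

lemma strictMono_levelDrop (hf : Continuous f) (hfpos : ∀ x, 0 < f x)
    (hFinv : ∀ x, Fi f (Finv x) = x) (ha1 : a < 1) (hh2 : Function.Injective (h2 f a)) :
    StrictMono (levelDrop f Finv a) :=
  strictMono_of_hasDerivAt_pos (hasDerivAt_levelDrop hf hfpos hFinv) fun y => by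
    rw [sub_pos, div_lt_one (hfpos _)]
    linarith [h2_denom_pos hf hfpos ha1 hh2 (Finv y)]

/-- The left side is antitone and the right side strictly increasing in `z`. -/
lemma eq_of_Finv_eq_h2 (hf : Continuous f) (hfpos : ∀ x, 0 < f x)
    (hFinv : ∀ x, Fi f (Finv x) = x) (ha0 : 0 < a) (ha1 : a < 1)
    (hh2 : Function.Injective (h2 f a)) {N : ℕ} {X₀ z₁ z₂ : ℝ}
    (h₁ : Finv (X₀ - N * levelDrop f Finv a z₁) = h2 f a (Finv z₁))
    (h₂ : Finv (X₀ - N * levelDrop f Finv a z₂) = h2 f a (Finv z₂)) : z₁ = z₂ := by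
  have hFinvM := strictMono_Finv hf hfpos hFinv
  have hlhs : Monotone fun z => -Finv (X₀ - N * levelDrop f Finv a z) := fun x y hxy =>
    neg_le_neg (hFinvM.monotone (sub_le_sub_left (mul_le_mul_of_nonneg_left
      ((strictMono_levelDrop hf hfpos hFinv ha1 hh2).monotone hxy) N.cast_nonneg) _))
  refine (((strictMono_h2 hf hfpos ha0 ha1 hh2).comp hFinvM).add_monotone hlhs).injective ?_
  simp only [Function.comp_apply, h₁, h₂, add_neg_cancel]

lemma pos_of_Finv_eq_h2 (hf : Continuous f) (hfpos : ∀ x, 0 < f x)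
    (hFinv : ∀ x, Fi f (Finv x) = x) (ha0 : 0 < a) (ha1 : a < 1)
    (hh2 : Function.Injective (h2 f a)) {N : ℕ} {X₀ z : ℝ} (hX₀ : 0 < X₀)
    (h : Finv (X₀ - N * levelDrop f Finv a z) = h2 f a (Finv z)) :
    0 < z ∧ 0 < levelDrop f Finv a z ∧ decayedLevel f Finv a z < X₀ - N * levelDrop f Finv a z := by
  have hFinvM := strictMono_Finv hf hfpos hFinv
  have hFinv0 := Finv_zero hf hfpos hFinv
  have hz : 0 < z := by
    by_contra! hz
    have hK : levelDrop f Finv a z ≤ 0 :=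
      not_lt.1 ((levelDrop_pos_iff hf hfpos hFinv ha0 ha1).not.2 (not_lt.2 hz))
    have hl : 0 < Finv (X₀ - N * levelDrop f Finv a z) :=
      hFinv0 ▸ hFinvM (by nlinarith [(N.cast_nonneg : (0 : ℝ) ≤ N)])
    have hr : h2 f a (Finv z) ≤ 0 :=
      h2_zero (f := f) (a := a) ▸ (strictMono_h2 hf hfpos ha0 ha1 hh2).monotone
        (hFinv0 ▸ hFinvM.monotone hz)
    linarith
  refine ⟨hz, (levelDrop_pos_iff hf hfpos hFinv ha0 ha1).2 hz, ?_⟩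
  have hu : 0 < Finv z := hFinv0 ▸ hFinvM hz
  rw [← hFinvM.lt_iff_lt, Finv_decayedLevel hf hfpos hFinv, h]
  calc a * Finv z < Finv z := by nlinarith
    _ < h2 f a (Finv z) := lt_h2 hf hfpos ha0 ha1 hh2 hu

end Optimum

/-- `postLevel f Finv a x n = F(Dₙ⁺) = xₙ + F(Dₙ)`, the level right after the `n`-th trade. -/
noncomputable def postLevel (f Finv : ℝ → ℝ) (a : ℝ) (x : ℕ → ℝ) (n : ℕ) : ℝ :=
  x n + Fi f (DvC f Finv a x n)

noncomputable def strategyOfLevels (f Finv : ℝ → ℝ) (a : ℝ) (Y : ℕ → ℝ) : ℕ → ℝ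
  | 0 => Y 0
  | n + 1 => Y (n + 1) - decayedLevel f Finv a (Y n)

/-- The levels `w₀, …, w_{N-1}` completed by the final level that exhausts the order `X₀`. -/
noncomputable def extendLevels (f Finv : ℝ → ℝ) (a : ℝ) {N : ℕ} (X₀ : ℝ) (w : Fin N → ℝ) :
    ℕ → ℝ :=
  fun n => if h : n < N then w ⟨n, h⟩ else X₀ - ∑ i, levelDrop f Finv a (w i)

section Levels

variable {f Finv : ℝ → ℝ} {a : ℝ}

lemma postLevel_zero (x : ℕ → ℝ) : postLevel f Finv a x 0 = x 0 := by
  rw [postLevel, DvC, Fi_zero, add_zero]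

lemma Fi_DvC_succ (x : ℕ → ℝ) (n : ℕ) :
    Fi f (DvC f Finv a x (n + 1)) = decayedLevel f Finv a (postLevel f Finv a x n) := by
  rw [DvC, decayedLevel, postLevel, add_comm]

lemma postLevel_succ (x : ℕ → ℝ) (n : ℕ) : postLevel f Finv a x (n + 1) =
    x (n + 1) + decayedLevel f Finv a (postLevel f Finv a x n) := by
  rw [postLevel, Fi_DvC_succ]

lemma strategyOfLevels_postLevel (x : ℕ → ℝ) :
    strategyOfLevels f Finv a (postLevel f Finv a x) = x := by
  funext n
  cases n with
  | zero => exact postLevel_zero x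
  | succ n => rw [strategyOfLevels, postLevel_succ, add_sub_cancel_right]

lemma postLevel_strategyOfLevels (Y : ℕ → ℝ) :
    postLevel f Finv a (strategyOfLevels f Finv a Y) = Y := by
  funext n
  induction n with
  | zero => exact postLevel_zero _
  | succ n ih => rw [postLevel_succ, ih, strategyOfLevels, sub_add_cancel]

lemma sum_range_succ_eq_postLevel (x : ℕ → ℝ) (N : ℕ) : ∑ n ∈ range (N + 1), x n =
    postLevel f Finv a x N + ∑ n ∈ range N, levelDrop f Finv a (postLevel f Finv a x n) := by
  induction N with
  | zero => simp [postLevel_zero]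
  | succ N ih => rw [sum_range_succ, ih, sum_range_succ, postLevel_succ, levelDrop]; ring

lemma C2C_eq_postLevel (hf : Continuous f) (hfpos : ∀ x, 0 < f x)
    (hFinv : ∀ x, Fi f (Finv x) = x) (N : ℕ) (x : ℕ → ℝ) : C2C f Finv a N x =
      Gf f Finv (postLevel f Finv a x N) +
        ∑ n ∈ range N, stageCost f Finv a (postLevel f Finv a x n) := by
  have hterm (n : ℕ) : Gf f Finv (x n + Fi f (DvC f Finv a x n)) - Ft f (DvC f Finv a x n) =
      Gf f Finv (postLevel f Finv a x n) - Gf f Finv (Fi f (DvC f Finv a x n)) := by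
    rw [Gf_Fi hf hfpos hFinv, postLevel]
  have hG0 : Gf f Finv (Fi f (DvC f Finv a x 0)) = 0 := by
    rw [Gf_Fi hf hfpos hFinv, DvC, Ft_zero]
  rw [C2C, sum_congr rfl fun n _ => hterm n, sum_sub_distrib, sum_range_succ, sum_range_succ',
    hG0]
  simp only [Fi_DvC_succ, stageCost, sum_sub_distrib]
  ring

lemma eqOn_of_postLevel_eq {N : ℕ} {X₀ : ℝ} {x y : ℕ → ℝ}
    (hx : ∑ n ∈ range (N + 1), x n = X₀) (hy : ∑ n ∈ range (N + 1), y n = X₀)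
    (h : ∀ n < N, postLevel f Finv a x n = postLevel f Finv a y n) :
    ∀ n ≤ N, x n = y n := by
  have hN : postLevel f Finv a x N = postLevel f Finv a y N := by
    rw [sum_range_succ_eq_postLevel (f := f) (Finv := Finv) (a := a)] at hx hy
    rw [sum_congr rfl fun n hn => congrArg _ (h n (mem_range.1 hn))] at hx
    linarith
  have hle (n : ℕ) (hn : n ≤ N) : postLevel f Finv a x n = postLevel f Finv a y n :=
    hn.lt_or_eq.elim (h n) (· ▸ hN)
  intro n hn
  rw [← congrFun (strategyOfLevels_postLevel (f := f) (Finv := Finv) (a := a) x) n,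
    ← congrFun (strategyOfLevels_postLevel (f := f) (Finv := Finv) (a := a) y) n]
  cases n with
  | zero => exact hle 0 hn
  | succ m => rw [strategyOfLevels, strategyOfLevels, hle _ hn, hle m (by omega)]

variable {N : ℕ} {X₀ : ℝ}

lemma extendLevels_of_lt (w : Fin N → ℝ) {n : ℕ} (h : n < N) :
    extendLevels f Finv a X₀ w n = w ⟨n, h⟩ :=
  dif_pos h

lemma extendLevels_self (w : Fin N → ℝ) :
    extendLevels f Finv a X₀ w N = X₀ - ∑ i, levelDrop f Finv a (w i) :=
  dif_neg (lt_irrefl N)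

lemma sum_range_comp_extendLevels (g : ℝ → ℝ) (w : Fin N → ℝ) :
    ∑ n ∈ range N, g (extendLevels f Finv a X₀ w n) = ∑ i, g (w i) :=
  (Fin.sum_univ_eq_sum_range (fun n => g (extendLevels f Finv a X₀ w n)) N).symm.trans
    (sum_congr rfl fun i _ => by rw [extendLevels_of_lt w i.isLt])

lemma sum_strategyOfLevels_extendLevels (w : Fin N → ℝ) :
    ∑ n ∈ range (N + 1), strategyOfLevels f Finv a (extendLevels f Finv a X₀ w) n = X₀ := by
  rw [sum_range_succ_eq_postLevel (f := f) (Finv := Finv) (a := a), postLevel_strategyOfLevels,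
    sum_range_comp_extendLevels, extendLevels_self, sub_add_cancel]

lemma C2C_strategyOfLevels_extendLevels (hf : Continuous f) (hfpos : ∀ x, 0 < f x)
    (hFinv : ∀ x, Fi f (Finv x) = x) (w : Fin N → ℝ) :
    C2C f Finv a N (strategyOfLevels f Finv a (extendLevels f Finv a X₀ w)) =
      reducedCost (stageCost f Finv a) (levelDrop f Finv a) (Gf f Finv) X₀ w := by
  rw [C2C_eq_postLevel hf hfpos hFinv, postLevel_strategyOfLevels, sum_range_comp_extendLevels,
    extendLevels_self, reducedCost, add_comm]

lemma C2C_eq_reducedCost (hf : Continuous f) (hfpos : ∀ x, 0 < f x)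
    (hFinv : ∀ x, Fi f (Finv x) = x) {x : ℕ → ℝ} (hx : ∑ n ∈ range (N + 1), x n = X₀) :
    C2C f Finv a N x = reducedCost (stageCost f Finv a) (levelDrop f Finv a) (Gf f Finv) X₀
      fun i : Fin N => postLevel f Finv a x i := by
  rw [C2C_eq_postLevel hf hfpos hFinv, reducedCost, ← hx,
    sum_range_succ_eq_postLevel (f := f) (Finv := Finv) (a := a),
    Fin.sum_univ_eq_sum_range (fun n => stageCost f Finv a (postLevel f Finv a x n)),
    Fin.sum_univ_eq_sum_range (fun n => levelDrop f Finv a (postLevel f Finv a x n))]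
  rw [add_sub_cancel_right, add_comm]

lemma forall_C2C_le_iff (hf : Continuous f) (hfpos : ∀ x, 0 < f x)
    (hFinv : ∀ x, Fi f (Finv x) = x) {x : ℕ → ℝ} (hx : ∑ n ∈ range (N + 1), x n = X₀) :
    (∀ y : ℕ → ℝ, ∑ n ∈ range (N + 1), y n = X₀ → C2C f Finv a N x ≤ C2C f Finv a N y) ↔
      ∀ w : Fin N → ℝ,
        reducedCost (stageCost f Finv a) (levelDrop f Finv a) (Gf f Finv) X₀
          (fun i : Fin N => postLevel f Finv a x i) ≤
        reducedCost (stageCost f Finv a) (levelDrop f Finv a) (Gf f Finv) X₀ w := by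
  rw [← C2C_eq_reducedCost hf hfpos hFinv hx]
  refine ⟨fun h w => ?_, fun h y hy => ?_⟩
  · rw [← C2C_strategyOfLevels_extendLevels hf hfpos hFinv]
    exact h _ (sum_strategyOfLevels_extendLevels w)
  · rw [C2C_eq_reducedCost hf hfpos hFinv hy]
    exact h _

end Levels

section Candidate

variable {f Finv : ℝ → ℝ} {a : ℝ} {N : ℕ} {X₀ z : ℝ}

lemma strategyOfLevels_extendLevels_const_zero (hN : 0 < N) :
    strategyOfLevels f Finv a (extendLevels f Finv a X₀ (Function.const (Fin N) z)) 0 = z :=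
  extendLevels_of_lt _ hN

lemma strategyOfLevels_extendLevels_const_of_lt {n : ℕ} (h1 : 1 ≤ n) (h2 : n < N) :
    strategyOfLevels f Finv a (extendLevels f Finv a X₀ (Function.const (Fin N) z)) n =
      levelDrop f Finv a z := by
  obtain ⟨m, rfl⟩ := Nat.exists_eq_add_of_le' h1
  rw [strategyOfLevels, extendLevels_of_lt _ h2, extendLevels_of_lt _ (by omega)]
  rfl

lemma strategyOfLevels_extendLevels_const_self (hN : 0 < N) :
    strategyOfLevels f Finv a (extendLevels f Finv a X₀ (Function.const (Fin N) z)) N =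
      X₀ - N * levelDrop f Finv a z - decayedLevel f Finv a z := by
  obtain ⟨m, rfl⟩ := Nat.exists_eq_succ_of_ne_zero hN.ne'
  rw [strategyOfLevels, extendLevels_self, extendLevels_of_lt _ (Nat.lt_succ_self m)]
  simp

lemma strategyOfLevels_extendLevels_const_pos (hN : 0 < N) (hz : 0 < z)
    (hKz : 0 < levelDrop f Finv a z)
    (hlast : decayedLevel f Finv a z < X₀ - N * levelDrop f Finv a z) {n : ℕ} (hn : n ≤ N) :
    0 < strategyOfLevels f Finv a (extendLevels f Finv a X₀ (Function.const (Fin N) z)) n := by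
  rcases Nat.eq_zero_or_pos n with rfl | hn1
  · rwa [strategyOfLevels_extendLevels_const_zero hN]
  rcases hn.lt_or_eq with hlt | rfl
  · rwa [strategyOfLevels_extendLevels_const_of_lt hn1 hlt]
  · rw [strategyOfLevels_extendLevels_const_self hN]
    linarith

end Candidate

theorem afs_version2_optimal_strategy_general
    (f Finv : ℝ → ℝ) (hf : Continuous f) (hfpos : ∀ x, 0 < f x)
    (hFinv₁ : ∀ x, Fi f (Finv x) = x)
    (τ : ℝ) (hτ : 0 < τ) (ρc : ℝ) (hρc : 0 < ρc)
    (a : ℝ) (ha : a = Real.exp (-(ρc * τ)))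
    (N : ℕ) (hN : 1 ≤ N) (X₀ : ℝ) (hX₀ : 0 < X₀)
    (hh2 : Function.Injective
      (fun x : ℝ => x * ((f x - a ^ 2 * f (a * x)) / (f x - a * f (a * x)))))
    (hfinf₁ : Tendsto (fun x : ℝ => x ^ 2 * sInf (f '' Set.uIcc (a * x) x)) atTop atTop)
    (hfinf₂ : Tendsto (fun x : ℝ => x ^ 2 * sInf (f '' Set.uIcc (a * x) x)) atBot atTop) :
    ∃ ξ : ℕ → ℝ,
      (∑ n ∈ Finset.range (N + 1), ξ n = X₀) ∧
      (∀ y : ℕ → ℝ, (∑ n ∈ Finset.range (N + 1), y n = X₀) →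
        C2C f Finv a N ξ ≤ C2C f Finv a N y) ∧
      (∀ y : ℕ → ℝ, (∑ n ∈ Finset.range (N + 1), y n = X₀) →
        (∀ z : ℕ → ℝ, (∑ n ∈ Finset.range (N + 1), z n = X₀) →
          C2C f Finv a N y ≤ C2C f Finv a N z) →
        ∀ n ≤ N, y n = ξ n) ∧
      (Finv (X₀ - (N : ℝ) * (ξ 0 - Fi f (a * Finv (ξ 0)))) =
        Finv (ξ 0) * ((f (Finv (ξ 0)) - a ^ 2 * f (a * Finv (ξ 0))) /
          (f (Finv (ξ 0)) - a * f (a * Finv (ξ 0))))) ∧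
      (∀ z : ℝ, Finv (X₀ - (N : ℝ) * (z - Fi f (a * Finv z))) =
        Finv z * ((f (Finv z) - a ^ 2 * f (a * Finv z)) /
          (f (Finv z) - a * f (a * Finv z))) → z = ξ 0) ∧
      (∀ n : ℕ, 1 ≤ n → n < N → ξ n = ξ 0 - Fi f (a * Finv (ξ 0))) ∧
      (ξ N = X₀ - ∑ n ∈ Finset.range N, ξ n) ∧
      (∀ n ≤ N, 0 < ξ n) := by
  have ha0 : 0 < a := ha ▸ exp_pos _
  have ha1 : a < 1 := ha ▸ exp_lt_one_iff.2 (neg_neg_of_pos (mul_pos hρc hτ))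
  obtain ⟨w, hw⟩ := exists_forall_reducedCost_stageCost_le hf hfpos hFinv₁ ha0 ha1
    hfinf₁ hfinf₂ (Fin N) X₀
  obtain ⟨z, rfl, hz⟩ := exists_const_of_forall_reducedCost_le hf hfpos hFinv₁ ha1 hh2 hN hw
  set ξ := strategyOfLevels f Finv a (extendLevels f Finv a X₀ (Function.const (Fin N) z))
  have hsum : ∑ n ∈ range (N + 1), ξ n = X₀ := sum_strategyOfLevels_extendLevels _
  have hξ0 : ξ 0 = z := strategyOfLevels_extendLevels_const_zero hN
  have hlevels : (fun i : Fin N => postLevel f Finv a ξ i) = Function.const _ z := by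
    ext i
    rw [postLevel_strategyOfLevels, extendLevels_of_lt _ i.is_lt, Function.const_apply]
  obtain ⟨hz0, hKz, hlast⟩ := pos_of_Finv_eq_h2 hf hfpos hFinv₁ ha0 ha1 hh2 hX₀ hz
  refine ⟨ξ, hsum, (forall_C2C_le_iff hf hfpos hFinv₁ hsum).2 (hlevels ▸ hw),
    fun y hy hymin => ?_, hξ0 ▸ hz,
    fun z' hz' => hξ0 ▸ eq_of_Finv_eq_h2 hf hfpos hFinv₁ ha0 ha1 hh2 hz' hz,
    fun n h1 h2 => hξ0 ▸ strategyOfLevels_extendLevels_const_of_lt h1 h2,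
    by rw [← hsum, sum_range_succ, add_sub_cancel_left],
    fun n hn => strategyOfLevels_extendLevels_const_pos hN hz0 hKz hlast hn⟩
  obtain ⟨z', hz'eq, hz'⟩ := exists_const_of_forall_reducedCost_le hf hfpos hFinv₁ ha1 hh2 hN
    ((forall_C2C_le_iff hf hfpos hFinv₁ hy).1 hymin)
  obtain rfl := eq_of_Finv_eq_h2 hf hfpos hFinv₁ ha0 ha1 hh2 hz' hz
  exact eqOn_of_postLevel_eq hy hsum fun n hn =>
    (congrFun hz'eq ⟨n, hn⟩).trans (congrFun hlevels ⟨n, hn⟩).symm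

/-- Optimal strategy of the AFS model, Version 2 (constant resilience speed `ρ`). -/
theorem afs_version2_optimal_strategy
    (f Finv : ℝ → ℝ) (hf : Continuous f) (hfpos : ∀ x, 0 < f x)
    (htop : Tendsto (Fi f) atTop atTop) (hbot : Tendsto (Fi f) atBot atBot)
    (hFinv₁ : ∀ x, Fi f (Finv x) = x) (hFinv₂ : ∀ x, Finv (Fi f x) = x)
    (τ : ℝ) (hτ : 0 < τ) (ρc : ℝ) (hρc : 0 < ρc)
    (a : ℝ) (ha : a = Real.exp (-(ρc * τ)))
    (N : ℕ) (hN : 1 ≤ N) (X₀ : ℝ) (hX₀ : 0 < X₀)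
    (hh2 : Function.Injective
      (fun x : ℝ => x * ((f x - a ^ 2 * f (a * x)) / (f x - a * f (a * x)))))
    (hfinf₁ : Tendsto (fun x : ℝ => x ^ 2 * sInf (f '' Set.uIcc (a * x) x)) atTop atTop)
    (hfinf₂ : Tendsto (fun x : ℝ => x ^ 2 * sInf (f '' Set.uIcc (a * x) x)) atBot atTop) :
    ∃ ξ : ℕ → ℝ,
      (∑ n ∈ Finset.range (N + 1), ξ n = X₀) ∧
      (∀ y : ℕ → ℝ, (∑ n ∈ Finset.range (N + 1), y n = X₀) →
        C2C f Finv a N ξ ≤ C2C f Finv a N y) ∧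
      (∀ y : ℕ → ℝ, (∑ n ∈ Finset.range (N + 1), y n = X₀) →
        (∀ z : ℕ → ℝ, (∑ n ∈ Finset.range (N + 1), z n = X₀) →
          C2C f Finv a N y ≤ C2C f Finv a N z) →
        ∀ n ≤ N, y n = ξ n) ∧
      (Finv (X₀ - (N : ℝ) * (ξ 0 - Fi f (a * Finv (ξ 0)))) =
        Finv (ξ 0) * ((f (Finv (ξ 0)) - a ^ 2 * f (a * Finv (ξ 0))) /
          (f (Finv (ξ 0)) - a * f (a * Finv (ξ 0))))) ∧
      (∀ z : ℝ, Finv (X₀ - (N : ℝ) * (z - Fi f (a * Finv z))) =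
        Finv z * ((f (Finv z) - a ^ 2 * f (a * Finv z)) /
          (f (Finv z) - a * f (a * Finv z))) → z = ξ 0) ∧
      (∀ n : ℕ, 1 ≤ n → n < N → ξ n = ξ 0 - Fi f (a * Finv (ξ 0))) ∧
      (ξ N = X₀ - ∑ n ∈ Finset.range N, ξ n) ∧
      (∀ n ≤ N, 0 < ξ n) :=
  afs_version2_optimal_strategy_general f Finv hf hfpos hFinv₁ τ hτ ρc hρc a ha N hN X₀ hX₀ hh2
    hfinf₁ hfinf₂
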